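/- arXiv:2201.06846 — 10 statements merged into one kernel-verified Lean document; each statement's English description precedes it below -/
import Mathlib

section
/- There exists a trifferent code of length 5 with cardinality 10 (for instance the 10 columns listed in Example 1: (0,0,0,0,0), (0,0,0,0,1), (0,1,1,1,2), (0,2,2,2,2), (1,0,2,1,2), (1,1,0,2,2), (1,2,1,0,2), (2,0,1,2,2), (2,1,2,0,2), (2,2,0,1,2)). -/
/-!
The nine words `(a, b, 2a + b, a + b)` over `𝔽₃` form the tetracode, in which any two coordinates
determine the word. So two distinct words agree in at most one of the four coordinates, and for
any three distinct words the three pairs agree in at most three coordinates together: the fourth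
separates all three.

A tenth word is gained by splitting one word `c` into two: append `0` and `1` to `c` and `2` to
every other word. Three distinct words of the new code either have distinct prefixes, which the
old code separates, or contain both copies of `c`, and then the third word ends in `2` and the
appended coordinate separates them.
-/

def Trifferent {n : ℕ} (C : Finset (Fin n → Fin 3)) : Prop :=
  ∀ x ∈ C, ∀ y ∈ C, ∀ z ∈ C, x ≠ y → x ≠ z → y ≠ z →
    ∃ i : Fin n, x i ≠ y i ∧ x i ≠ z i ∧ y i ≠ z i

open Finset

theorem card_eq_add_hammingDist {ι β : Type*} [Fintype ι] [DecidableEq β] (x y : ι → β) :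
    #{i | x i = y i} + hammingDist x y = Fintype.card ι := by
  rw [hammingDist, card_filter_add_card_filter_not, card_univ]

variable {n : ℕ} {C : Finset (Fin n → Fin 3)} {c : Fin n → Fin 3}

theorem Trifferent.of_hammingDist_le {d : ℕ} (hd : 2 * n < 3 * d)
    (hC : ∀ x ∈ C, ∀ y ∈ C, x ≠ y → d ≤ hammingDist x y) : Trifferent C := by
  intro x hx y hy z hz hxy hxz hyz
  let agree (u v : Fin n → Fin 3) : Finset (Fin n) := {i | u i = v i}
  have hagree {u v} (hu : u ∈ C) (hv : v ∈ C) (huv : u ≠ v) : #(agree u v) + d ≤ n := by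
    have hsum := card_eq_add_hammingDist u v
    rw [Fintype.card_fin] at hsum
    have := hC u hu v hv huv
    change #{i | u i = v i} + d ≤ n
    omega
  have hcover : #(agree x y ∪ agree x z ∪ agree y z) < #(univ : Finset (Fin n)) :=
    calc _ ≤ #(agree x y) + #(agree x z) + #(agree y z) :=
          (card_union_le _ _).trans (Nat.add_le_add_right (card_union_le _ _) _)
      _ < n := by
          have := hagree hx hy hxy; have := hagree hx hz hxz; have := hagree hy hz hyz; omega
      _ = _ := by simp
  obtain ⟨i, -, hi⟩ := exists_mem_notMem_of_card_lt_card hcover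
  simp only [agree, mem_union, mem_filter, mem_univ, true_and, not_or] at hi
  exact ⟨i, hi.1.1, hi.1.2, hi.2⟩

def splitWord (C : Finset (Fin n → Fin 3)) (c : Fin n → Fin 3) : Finset (Fin (n + 1) → Fin 3) :=
  insert (Fin.snoc c 0) (insert (Fin.snoc c 1) ((C.erase c).image fun x ↦ Fin.snoc x 2))

theorem mem_splitWord (hc : c ∈ C) {u : Fin (n + 1) → Fin 3} :
    u ∈ splitWord C c ↔ Fin.init u ∈ C ∧ (u (Fin.last n) = 2 ↔ Fin.init u ≠ c) := by
  rw [← Fin.snoc_init_self u]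
  generalize Fin.init u = x, u (Fin.last n) = a
  simp only [splitWord, mem_insert, mem_image, mem_erase, Fin.snoc_inj, Fin.init_snoc,
    Fin.snoc_last]
  fin_cases a <;> grind

theorem card_splitWord (hc : c ∈ C) : #(splitWord C c) = #C + 1 := by
  rw [splitWord, card_insert_of_notMem, card_insert_of_notMem,
    card_image_of_injective _ (Fin.snoc_left_injective _), card_erase_of_mem hc]
  · have := card_pos.2 ⟨c, hc⟩
    omega
  all_goals simp

theorem Trifferent.splitWord (hC : Trifferent C) (hc : c ∈ C) : Trifferent (splitWord C c) := by
  intro x hx y hy z hz hxy hxz hyz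
  rw [mem_splitWord hc] at hx hy hz
  by_cases hinit : Fin.init x ≠ Fin.init y ∧ Fin.init x ≠ Fin.init z ∧ Fin.init y ≠ Fin.init z
  · obtain ⟨i, hi⟩ := hC _ hx.1 _ hy.1 _ hz.1 hinit.1 hinit.2.1 hinit.2.2
    exact ⟨i.castSucc, hi⟩
  · have hne {u v : Fin (n + 1) → Fin 3} (huv : u ≠ v) :
        Fin.init u ≠ Fin.init v ∨ u (Fin.last n) ≠ v (Fin.last n) := by
      contrapose! huv
      rw [← Fin.snoc_init_self u, ← Fin.snoc_init_self v, huv.1, huv.2]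
    have := hne hxy; have := hne hxz; have := hne hyz
    exact ⟨Fin.last n, by grind⟩

def tetracodeWord (p : Fin 3 × Fin 3) : Fin 4 → Fin 3 := ![p.1, p.2, 2 * p.1 + p.2, p.1 + p.2]

def tetracode : Finset (Fin 4 → Fin 3) := univ.image tetracodeWord

theorem tetracodeWord_injective : Function.Injective tetracodeWord := fun _ _ h ↦
  Prod.ext (congrFun h 0) (congrFun h 1)

theorem card_tetracode : #tetracode = 9 := by
  rw [tetracode, card_image_of_injective _ tetracodeWord_injective]
  rfl

theorem three_le_hammingDist_tetracodeWord :
    ∀ p q, p ≠ q → 3 ≤ hammingDist (tetracodeWord p) (tetracodeWord q) := by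
  decide

theorem zero_mem_tetracode : 0 ∈ tetracode :=
  mem_image.2 ⟨0, mem_univ _, by decide⟩

theorem trifferent_tetracode : Trifferent tetracode := by
  refine Trifferent.of_hammingDist_le (d := 3) (by norm_num) ?_
  simp only [tetracode, mem_image, mem_univ, true_and]
  rintro _ ⟨p, rfl⟩ _ ⟨q, rfl⟩ hpq
  exact three_le_hammingDist_tetracodeWord p q (ne_of_apply_ne _ hpq)

theorem exists_trifferent_length_five_card_ten :
    ∃ C : Finset (Fin 5 → Fin 3), Trifferent C ∧ C.card = 10 :=
  ⟨splitWord tetracode 0, trifferent_tetracode.splitWord zero_mem_tetracode,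
    by rw [card_splitWord zero_mem_tetracode, card_tetracode]⟩
end

section
/- There exists a trifferent code of length 6 with cardinality 13 (for instance the 13 columns listed in Example 2, whose rows are: (0,0,2,2,2,2,2,0,1,1,1,1,1), (0,1,0,2,2,1,2,2,0,1,1,2,1), (0,1,1,0,2,2,1,2,2,0,1,1,2), (0,1,1,1,0,2,2,2,2,2,0,1,1), (0,1,2,1,1,0,2,2,1,2,2,0,1), (0,1,1,2,1,1,0,2,2,1,2,2,0)). -/
set_option maxHeartbeats 4000000 in
theorem exists_trifferent_length_six_card_thirteen :
    ∃ C : Finset (Fin 6 → Fin 3), Trifferent C ∧ C.card = 13 := by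
  refine ⟨{![0,0,0,0,0,0], ![0,1,1,1,1,1], ![2,0,1,1,2,1], ![2,2,0,1,1,2],
       ![2,2,2,0,1,1], ![2,1,2,2,0,1], ![2,2,1,2,2,0], ![0,2,2,2,2,2],
       ![1,0,2,2,1,2], ![1,1,0,2,2,1], ![1,1,1,0,2,2], ![1,2,1,1,0,2],
       ![1,1,2,1,1,0]}, ?_, by decide⟩
  intro x hx y hy z hz
  fin_cases hx <;> fin_cases hy <;> fin_cases hz <;> decide
end

section
/- Recursive upper bound: let n ≥ 2 and let M be a natural number such that every trifferent code of length n−1 has cardinality at most M. Then every trifferent code of length n has cardinality at most ⌊(3/2)·M⌋. -/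
private lemma fin3_eq : ∀ a b u v : Fin 3, a ≠ b → u ≠ a → u ≠ b → v ≠ a → v ≠ b →
    u = v := by decide

private lemma proj_card_le (n M : ℕ) (hn : 2 ≤ n)
    (hM : ∀ C : Finset (Fin (n - 1) → Fin 3), Trifferent C → C.card ≤ M)
    (C : Finset (Fin n → Fin 3)) (hC : Trifferent C)
    (j : Fin n) (hj : (j : ℕ) = n - 1)
    (S : Finset (Fin n → Fin 3)) (hSC : S ⊆ C)
    (hinj : Set.InjOn (fun (f : Fin n → Fin 3) (i : Fin (n-1)) => f (Fin.castLE (Nat.sub_le n 1) i)) ↑S)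
    (hS : ∀ u ∈ S, ∀ v ∈ S, ∀ w ∈ S, u j = v j ∨ u j = w j ∨ v j = w j) :
    S.card ≤ M := by
  set π : (Fin n → Fin 3) → (Fin (n-1) → Fin 3) :=
    fun f (i : Fin (n-1)) => f (Fin.castLE (Nat.sub_le n 1) i) with hπ
  have hcard : (S.image π).card = S.card := Finset.card_image_of_injOn hinj
  have htr : Trifferent (S.image π) := by
    intro px hpx py hpy pz hpz hxy hxz hyz
    obtain ⟨u, hu, rfl⟩ := Finset.mem_image.mp hpx
    obtain ⟨v, hv, rfl⟩ := Finset.mem_image.mp hpy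
    obtain ⟨w, hw, rfl⟩ := Finset.mem_image.mp hpz
    have huv : u ≠ v := fun h => hxy (by rw [h])
    have huw : u ≠ w := fun h => hxz (by rw [h])
    have hvw : v ≠ w := fun h => hyz (by rw [h])
    obtain ⟨i, h1, h2, h3⟩ := hC u (hSC hu) v (hSC hv) w (hSC hw) huv huw hvw
    have hij : i ≠ j := by
      rintro rfl
      rcases hS u hu v hv w hw with h | h | h
      exacts [h1 h, h2 h, h3 h]
    have hlt : (i : ℕ) < n := i.isLt
    have hne : (i : ℕ) ≠ n - 1 := fun h => hij (Fin.ext (by rw [h, hj]))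
    have hi : (i : ℕ) < n - 1 := by omega
    refine ⟨⟨i, hi⟩, ?_⟩
    have hcast : Fin.castLE (Nat.sub_le n 1) (⟨i, hi⟩ : Fin (n-1)) = i := Fin.ext rfl
    simp only [hπ, hcast]
    exact ⟨h1, h2, h3⟩
  calc S.card = (S.image π).card := hcard.symm
    _ ≤ M := hM _ htr

theorem trifferent_recursive_upper_bound
    (n : ℕ) (hn : 2 ≤ n) (M : ℕ)
    (hM : ∀ C : Finset (Fin (n - 1) → Fin 3), Trifferent C → C.card ≤ M) :
    ∀ C : Finset (Fin n → Fin 3), Trifferent C → C.card ≤ 3 * M / 2 := by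
  -- First: M ≥ 2, by exhibiting a 2-element trifferent code of length n - 1
  have i0 : Fin (n - 1) := ⟨0, by omega⟩
  have hM2 : 2 ≤ M := by
    have hne : (fun _ : Fin (n-1) => (0 : Fin 3)) ≠ (fun _ => 1) := by
      intro h
      have := congrFun h i0
      simp at this
    have htr : Trifferent ({fun _ => 0, fun _ => 1} : Finset (Fin (n-1) → Fin 3)) := by
      intro x hx y hy z hz hxy hxz hyz
      simp only [Finset.mem_insert, Finset.mem_singleton] at hx hy hz
      rcases hx with rfl | rfl <;> rcases hy with rfl | rfl <;> rcases hz with rfl | rfl <;>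
        simp_all
    have := hM _ htr
    rwa [Finset.card_pair hne] at this
  intro C hC
  obtain ⟨j, hjval⟩ : ∃ j : Fin n, (j : ℕ) = n - 1 := ⟨⟨n - 1, by omega⟩, rfl⟩
  -- agreement off j from equal projections
  have agree_of_proj : ∀ u v : Fin n → Fin 3,
      (fun (i : Fin (n-1)) => u (Fin.castLE (Nat.sub_le n 1) i)) =
      (fun (i : Fin (n-1)) => v (Fin.castLE (Nat.sub_le n 1) i)) →
      ∀ i : Fin n, i ≠ j → u i = v i := by
    intro u v h i hi
    have hne : (i : ℕ) ≠ n - 1 := fun hh => hi (Fin.ext (by rw [hh, hjval]))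
    have hlt : (i : ℕ) < n - 1 := by have := i.isLt; omega
    have := congrFun h ⟨i, hlt⟩
    have hcast : Fin.castLE (Nat.sub_le n 1) (⟨i, hlt⟩ : Fin (n-1)) = i := Fin.ext rfl
    rwa [hcast] at this
  by_cases hcol : ∃ x ∈ C, ∃ y ∈ C, x ≠ y ∧ ∀ i : Fin n, i ≠ j → x i = y i
  · -- collision case
    obtain ⟨x, hx, y, hy, hxy, hagree⟩ := hcol
    have hxyj : x j ≠ y j := by
      intro h
      exact hxy (funext fun i => by
        by_cases hi : i = j
        · rw [hi]; exact h
        · exact hagree i hi)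
    by_cases h4 : C.card ≤ 3
    · omega
    push_neg at h4
    have hz : ∀ z ∈ C, z ≠ x → z ≠ y → z j ≠ x j ∧ z j ≠ y j := by
      intro z hzC hzx hzy
      obtain ⟨i, h1, h2, h3⟩ := hC x hx y hy z hzC hxy (Ne.symm hzx) (Ne.symm hzy)
      have hij : i = j := by
        by_contra h
        exact h1 (hagree i h)
      rw [hij] at h2 h3
      exact ⟨Ne.symm h2, Ne.symm h3⟩
    -- S = C.erase y
    have hinj : Set.InjOn (fun (f : Fin n → Fin 3) (i : Fin (n-1)) => f (Fin.castLE (Nat.sub_le n 1) i)) ↑(C.erase y) := by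
      -- helper: if v ∈ C.erase y, v ≠ x, and v agrees with x off j, contradiction
      have key : ∀ v ∈ C.erase y, v ≠ x → (∀ i : Fin n, i ≠ j → x i = v i) → False := by
        intro v hv hvx hagr
        have hvC : v ∈ C := Finset.mem_of_mem_erase hv
        have hvy : v ≠ y := Finset.ne_of_mem_erase hv
        have hvj := hz v hvC hvx hvy
        -- find a fourth element w
        have hcard3 : 1 ≤ (((C.erase x).erase y).erase v).card := by
          have e1 : (C.erase x).card = C.card - 1 := Finset.card_erase_of_mem hx
          have e2 : ((C.erase x).erase y).card = (C.erase x).card - 1 :=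
            Finset.card_erase_of_mem (Finset.mem_erase.mpr ⟨Ne.symm hxy, hy⟩)
          have e3 : (((C.erase x).erase y).erase v).card = ((C.erase x).erase y).card - 1 :=
            Finset.card_erase_of_mem
              (Finset.mem_erase.mpr ⟨hvy, Finset.mem_erase.mpr ⟨hvx, hvC⟩⟩)
          omega
        obtain ⟨w, hw⟩ := Finset.card_pos.mp hcard3
        have hwv : w ≠ v := Finset.ne_of_mem_erase hw
        have hw' := Finset.mem_of_mem_erase hw
        have hwy : w ≠ y := Finset.ne_of_mem_erase hw'
        have hw'' := Finset.mem_of_mem_erase hw'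
        have hwx : w ≠ x := Finset.ne_of_mem_erase hw''
        have hwC : w ∈ C := Finset.mem_of_mem_erase hw''
        have hwj := hz w hwC hwx hwy
        have hvw : v j = w j := fin3_eq (x j) (y j) (v j) (w j) hxyj hvj.1 hvj.2 hwj.1 hwj.2
        obtain ⟨i, h1, h2, h3⟩ := hC x hx v hvC w hwC (Ne.symm hvx) (Ne.symm hwx) (hwv ∘ Eq.symm)
        by_cases hij : i = j
        · rw [hij] at h3; exact h3 hvw
        · exact h1 (hagr i hij)
      intro u hu v hv hpi
      simp only [Finset.mem_coe] at hu hv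
      by_contra huv
      have hagr : ∀ i : Fin n, i ≠ j → u i = v i := agree_of_proj u v hpi
      have huC : u ∈ C := Finset.mem_of_mem_erase hu
      have huy : u ≠ y := Finset.ne_of_mem_erase hu
      have hvC : v ∈ C := Finset.mem_of_mem_erase hv
      have hvy : v ≠ y := Finset.ne_of_mem_erase hv
      by_cases hux : u = x
      · exact key v hv (fun h => huv (hux.trans h.symm)) (fun i hi => hux ▸ hagr i hi)
      · by_cases hvx : v = x
        · exact key u hu hux (fun i hi => hvx ▸ (hagr i hi).symm)
        · have huj := hz u huC hux huy
          have hvj := hz v hvC hvx hvy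
          have : u j = v j := fin3_eq (x j) (y j) (u j) (v j) hxyj huj.1 huj.2 hvj.1 hvj.2
          exact huv (funext fun i => by
            by_cases hi : i = j
            · rw [hi]; exact this
            · exact hagr i hi)
    have hS : ∀ u ∈ C.erase y, ∀ v ∈ C.erase y, ∀ w ∈ C.erase y,
        u j = v j ∨ u j = w j ∨ v j = w j := by
      intro u hu v hv w hw
      have hval : ∀ z ∈ C.erase y, z ≠ x → z j ≠ x j ∧ z j ≠ y j := fun z hzm hzx =>
        hz z (Finset.mem_of_mem_erase hzm) hzx (Finset.ne_of_mem_erase hzm)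
      by_cases hu' : u = x
      · by_cases hv' : v = x
        · left; rw [hu', hv']
        · by_cases hw' : w = x
          · right; left; rw [hu', hw']
          · right; right
            have h1 := hval v hv hv'
            have h2 := hval w hw hw'
            exact fin3_eq (x j) (y j) (v j) (w j) hxyj h1.1 h1.2 h2.1 h2.2
      · by_cases hv' : v = x
        · by_cases hw' : w = x
          · right; right; rw [hv', hw']
          · right; left
            have h1 := hval u hu hu'
            have h2 := hval w hw hw'
            exact fin3_eq (x j) (y j) (u j) (w j) hxyj h1.1 h1.2 h2.1 h2.2
        · left
          have h1 := hval u hu hu'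
          have h2 := hval v hv hv'
          exact fin3_eq (x j) (y j) (u j) (v j) hxyj h1.1 h1.2 h2.1 h2.2
    have hle := proj_card_le n M hn hM C hC j hjval (C.erase y) (Finset.erase_subset _ _)
      hinj hS
    have := Finset.card_erase_of_mem hy
    omega
  · -- no collision case
    push_neg at hcol
    have pair : ∀ a b : Fin 3, a ≠ b →
        (C.filter (fun z => z j = a)).card + (C.filter (fun z => z j = b)).card ≤ M := by
      intro a b hab
      set S := C.filter (fun z => z j = a ∨ z j = b) with hSdef
      have hSC : S ⊆ C := Finset.filter_subset _ _
      have hinj : Set.InjOn (fun (f : Fin n → Fin 3) (i : Fin (n-1)) => f (Fin.castLE (Nat.sub_le n 1) i)) ↑S := by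
        intro u hu v hv hpi
        by_contra huv
        have hagr := agree_of_proj u v hpi
        obtain ⟨i, hij, hne⟩ := hcol u (hSC hu) v (hSC hv) huv
        exact hne (hagr i hij)
      have hS : ∀ u ∈ S, ∀ v ∈ S, ∀ w ∈ S, u j = v j ∨ u j = w j ∨ v j = w j := by
        intro u hu v hv w hw
        have hu' := (Finset.mem_filter.mp hu).2
        have hv' := (Finset.mem_filter.mp hv).2
        have hw' := (Finset.mem_filter.mp hw).2
        rcases hu' with h | h <;> rcases hv' with h' | h' <;> rcases hw' with h'' | h'' <;>
          simp [h, h', h'']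
      have hle := proj_card_le n M hn hM C hC j hjval S hSC hinj hS
      have hcard : S.card = (C.filter (fun z => z j = a)).card +
          (C.filter (fun z => z j = b)).card := by
        rw [hSdef, Finset.filter_or]
        exact Finset.card_union_of_disjoint (by
          simp only [Finset.disjoint_filter]
          intro z _ hza hzb
          exact hab (hza ▸ hzb ▸ rfl))
      rw [← hcard]
      exact hle
    have hsum : (C.filter (fun z => z j = (0 : Fin 3))).card +
        (C.filter (fun z => z j = (1 : Fin 3))).card +
        (C.filter (fun z => z j = (2 : Fin 3))).card = C.card := by
      have key : ∀ q : Fin 3, (q = 0 ∨ q = 1) ↔ ¬ q = 2 := by decide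
      have e1 : C.filter (fun z => z j = (0:Fin 3) ∨ z j = 1) =
          C.filter (fun z => ¬ z j = 2) := by
        apply Finset.filter_congr
        intro z _
        simp [key (z j)]
      have e2 := Finset.card_filter_add_card_filter_not
        (s := C) (fun z => z j = (2 : Fin 3))
      have e3 : (C.filter (fun z => z j = (0:Fin 3) ∨ z j = 1)).card =
          (C.filter (fun z => z j = (0:Fin 3))).card +
          (C.filter (fun z => z j = (1:Fin 3))).card := by
        rw [Finset.filter_or]
        exact Finset.card_union_of_disjoint (by
          simp only [Finset.disjoint_filter]
          intro z _ hza hzb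
          simp [hza] at hzb)
      rw [e1] at e3
      rw [← e3, Nat.add_comm]
      exact e2
    have h01 := pair 0 1 (by decide)
    have h02 := pair 0 2 (by decide)
    have h12 := pair 1 2 (by decide)
    obtain ⟨A, hA⟩ : ∃ A, (C.filter (fun z => z j = (0 : Fin 3))).card = A := ⟨_, rfl⟩
    obtain ⟨B, hB⟩ : ∃ B, (C.filter (fun z => z j = (1 : Fin 3))).card = B := ⟨_, rfl⟩
    obtain ⟨D, hD⟩ : ∃ D, (C.filter (fun z => z j = (2 : Fin 3))).card = D := ⟨_, rfl⟩
    rw [hA, hB] at h01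
    rw [hA, hD] at h02
    rw [hB, hD] at h12
    rw [hA, hB, hD] at hsum
    obtain ⟨N, hN⟩ : ∃ N, C.card = N := ⟨_, rfl⟩
    rw [hN] at hsum ⊢
    clear * - h01 h02 h12 hsum hM2
    omega
end

section
/- Monotonicity of the maximum cardinality: for every n ≥ 2, if there exists a trifferent code of length n−1 with cardinality M, then there exists a trifferent code of length n with cardinality M+1. -/
private def TriP {k : ℕ} (x y z : Fin k → Fin 3) : Prop :=
  ∃ i : Fin k, x i ≠ y i ∧ x i ≠ z i ∧ y i ≠ z i

private lemma TriP_swap1 {k : ℕ} {x y z : Fin k → Fin 3} (h : TriP x y z) : TriP y x z := by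
  obtain ⟨i, h1, h2, h3⟩ := h
  exact ⟨i, h1.symm, h3, h2⟩

private lemma TriP_swap2 {k : ℕ} {x y z : Fin k → Fin 3} (h : TriP x y z) : TriP x z y := by
  obtain ⟨i, h1, h2, h3⟩ := h
  exact ⟨i, h2, h1, h3.symm⟩

private lemma helper1 {m : ℕ} {C : Finset (Fin m → Fin 3)} (hC : Trifferent C)
    (x0 : Fin m → Fin 3) {a b c : Fin m → Fin 3} (ha : a ∈ C) (hb : b ∈ C) (hc : c ∈ C)
    (hab : a ≠ b) (hac : a ≠ c) (hbc : b ≠ c) :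
    TriP (Fin.snoc a (if a = x0 then (1 : Fin 3) else 0))
         (Fin.snoc b (if b = x0 then (1 : Fin 3) else 0))
         (Fin.snoc c (if c = x0 then (1 : Fin 3) else 0)) := by
  obtain ⟨i, h1, h2, h3⟩ := hC a ha b hb c hc hab hac hbc
  exact ⟨i.castSucc, by simpa [Fin.snoc_castSucc] using ⟨h1, h2, h3⟩⟩

private lemma helper2 {m : ℕ} {C : Finset (Fin m → Fin 3)} (hC : Trifferent C)
    {x0 : Fin m → Fin 3} (hx0 : x0 ∈ C) {a b : Fin m → Fin 3} (ha : a ∈ C) (hb : b ∈ C)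
    (hab : a ≠ b) :
    TriP (Fin.snoc a (if a = x0 then (1 : Fin 3) else 0))
         (Fin.snoc b (if b = x0 then (1 : Fin 3) else 0))
         (Fin.snoc x0 (2 : Fin 3)) := by
  by_cases hax : a = x0
  · subst hax
    have hbx : b ≠ a := fun h => hab h.symm
    refine ⟨Fin.last m, ?_⟩
    simp [Fin.snoc_last, hbx]
  · by_cases hbx : b = x0
    · subst hbx
      refine ⟨Fin.last m, ?_⟩
      simp [Fin.snoc_last, hax]
    · obtain ⟨i, h1, h2, h3⟩ := hC a ha b hb x0 hx0 hab hax hbx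
      exact ⟨i.castSucc, by simpa [Fin.snoc_castSucc] using ⟨h1, h2, h3⟩⟩

theorem trifferent_card_succ
    (n : ℕ) (hn : 2 ≤ n) (M : ℕ)
    (h : ∃ C : Finset (Fin (n - 1) → Fin 3), Trifferent C ∧ C.card = M) :
    ∃ D : Finset (Fin n → Fin 3), Trifferent D ∧ D.card = M + 1 := by
  obtain ⟨C, hC, hcard⟩ := h
  obtain ⟨m, rfl⟩ : ∃ m, n = m + 1 := ⟨n - 1, by omega⟩
  rcases C.eq_empty_or_nonempty with hE | ⟨x0, hx0⟩
  · have hM : M = 0 := by rw [← hcard, hE]; simp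
    subst hM
    refine ⟨{fun _ => 0}, ?_, by simp⟩
    intro x hx y hy z hz hxy hxz hyz
    simp only [Finset.mem_singleton] at hx hy
    exact absurd (hx.trans hy.symm) hxy
  · refine ⟨insert (Fin.snoc x0 (2 : Fin 3))
      (C.image (fun x => Fin.snoc x (if x = x0 then (1 : Fin 3) else 0))), ?_, ?_⟩
    · intro x hx y hy z hz hxy hxz hyz
      rw [Finset.mem_insert, Finset.mem_image] at hx hy hz
      show TriP x y z
      rcases hx with rfl | ⟨a, ha, rfl⟩
      · rcases hy with rfl | ⟨b, hb, rfl⟩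
        · exact absurd rfl hxy
        · rcases hz with rfl | ⟨c, hc, rfl⟩
          · exact absurd rfl hxz
          · have hbc : b ≠ c := fun h => hyz (by rw [h])
            exact TriP_swap1 (TriP_swap2 (helper2 hC hx0 hb hc hbc))
      · rcases hy with rfl | ⟨b, hb, rfl⟩
        · rcases hz with rfl | ⟨c, hc, rfl⟩
          · exact absurd rfl hyz
          · have hac : a ≠ c := fun h => hxz (by rw [h])
            exact TriP_swap2 (helper2 hC hx0 ha hc hac)
        · rcases hz with rfl | ⟨c, hc, rfl⟩
          · have hab : a ≠ b := fun h => hxy (by rw [h])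
            exact helper2 hC hx0 ha hb hab
          · have hab : a ≠ b := fun h => hxy (by rw [h])
            have hac : a ≠ c := fun h => hxz (by rw [h])
            have hbc : b ≠ c := fun h => hyz (by rw [h])
            exact helper1 hC x0 ha hb hc hab hac hbc
    · have hnotmem : (Fin.snoc x0 (2 : Fin 3) : Fin (m+1) → Fin 3) ∉
          C.image (fun x => Fin.snoc x (if x = x0 then (1 : Fin 3) else 0)) := by
        rw [Finset.mem_image]
        rintro ⟨a, ha, hEa⟩
        have := congrFun hEa (Fin.last m)
        simp only [Fin.snoc_last] at this
        split at this <;> exact absurd this.symm (by decide)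
      rw [Finset.card_insert_of_notMem hnotmem, Finset.card_image_of_injective _ ?_, hcard]
      intro a b hab
      funext i
      have := congrFun hab i.castSucc
      simpa [Fin.snoc_castSucc] using this
end

section
/- Elementary bound for trifferent codes: for every n ≥ 1, every trifferent code C ⊆ {0,1,2}^n satisfies |C| ≤ 2·(3/2)^n. -/
open Finset

theorem Finset.exists_card_mul_card_fiber_le {α β : Type*} [DecidableEq β] [Fintype β]
    [Nonempty β] (s : Finset α) (f : α → β) :
    ∃ b, Fintype.card β * #{x ∈ s | f x = b} ≤ #s := by
  have hβ : (0 : ℚ) < Fintype.card β := by exact_mod_cast Fintype.card_pos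
  obtain ⟨b, -, hb⟩ := exists_card_fiber_le_of_card_le_nsmul (f := f) (s := s)
    (b := (#s : ℚ) / Fintype.card β) univ_nonempty (by simp [mul_div_cancel₀, hβ.ne'])
  refine ⟨b, ?_⟩
  rw [le_div_iff₀ hβ] at hb
  exact_mod_cast (by linarith : (Fintype.card β : ℚ) * #{x ∈ s | f x = b} ≤ #s)

namespace Trifferent

variable {n : ℕ}

section

variable {C D : Finset (Fin n → Fin 3)}

theorem mono (hC : Trifferent C) (hDC : D ⊆ C) : Trifferent D :=
  fun x hx y hy z hz => hC x (hDC hx) y (hDC hy) z (hDC hz)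

theorem exists_ne_separating_of_forall_ne (hC : Trifferent C) {i : Fin n} {a : Fin 3}
    (ha : ∀ x ∈ C, x i ≠ a) {x y z : Fin n → Fin 3} (hx : x ∈ C) (hy : y ∈ C) (hz : z ∈ C)
    (hxy : x ≠ y) (hxz : x ≠ z) (hyz : y ≠ z) :
    ∃ j ≠ i, x j ≠ y j ∧ x j ≠ z j ∧ y j ≠ z j := by
  obtain ⟨j, hj⟩ := hC x hx y hy z hz hxy hxz hyz
  refine ⟨j, ?_, hj⟩
  rintro rfl
  have := ha x hx
  have := ha y hy
  have := ha z hz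
  omega

end

section

variable {C : Finset (Fin (n + 1) → Fin 3)} {i : Fin (n + 1)} {a : Fin 3}

theorem image_removeNth (hC : Trifferent C) (ha : ∀ x ∈ C, x i ≠ a) :
    Trifferent (C.image (Fin.removeNth i)) := by
  simp only [Trifferent, mem_image, forall_exists_index, and_imp]
  rintro _ x hx rfl _ y hy rfl _ z hz rfl hxy hxz hyz
  obtain ⟨j, hji, hj⟩ := hC.exists_ne_separating_of_forall_ne ha hx hy hz
    (ne_of_apply_ne _ hxy) (ne_of_apply_ne _ hxz) (ne_of_apply_ne _ hyz)
  obtain ⟨k, rfl⟩ := Fin.exists_succAbove_eq hji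
  exact ⟨k, hj⟩

theorem injOn_removeNth (hC : Trifferent C) (ha : ∀ x ∈ C, x i ≠ a) (hcard : 2 < #C) :
    Set.InjOn (Fin.removeNth i) (C : Set (Fin (n + 1) → Fin 3)) := by
  intro x hx y hy hxy
  by_contra hne
  obtain ⟨z, hz, hzxy⟩ := exists_mem_notMem_of_card_lt_card
    ((card_le_two : #{x, y} ≤ 2).trans_lt hcard)
  simp only [mem_insert, mem_singleton, not_or] at hzxy
  obtain ⟨j, hji, hj, -⟩ := hC.exists_ne_separating_of_forall_ne ha hx hy hz hne
    (Ne.symm hzxy.1) (Ne.symm hzxy.2)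
  obtain ⟨k, rfl⟩ := Fin.exists_succAbove_eq hji
  exact hj (congrFun hxy k)

end

theorem card_mul_two_pow_le {C : Finset (Fin n → Fin 3)} (hC : Trifferent C) :
    #C * 2 ^ n ≤ 2 * 3 ^ n := by
  induction n with
  | zero =>
    have : #C ≤ 1 := card_le_one_of_subsingleton C
    omega
  | succ n ih =>
    obtain ⟨a, ha⟩ := C.exists_card_mul_card_fiber_le (· 0)
    set C' := C.filter (· 0 ≠ a)
    have hC'a : ∀ x ∈ C', x 0 ≠ a := fun x hx => (mem_filter.1 hx).2
    have hC' : Trifferent C' := hC.mono (filter_subset _ _)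
    have hcard : 2 * #C ≤ 3 * #C' := by
      have : #{x ∈ C | x 0 = a} + #C' = #C := card_filter_add_card_filter_not _
      simp only [Fintype.card_fin] at ha
      omega
    have hC'_bound : #C' * 2 ^ n ≤ 2 * 3 ^ n := by
      rcases le_or_gt #C' 2 with h | h
      · exact Nat.mul_le_mul h (Nat.pow_le_pow_left (by norm_num) n)
      · rw [← card_image_of_injOn (hC'.injOn_removeNth hC'a h)]
        exact ih (hC'.image_removeNth hC'a)
    calc #C * 2 ^ (n + 1) = 2 * #C * 2 ^ n := by ring
      _ ≤ 3 * #C' * 2 ^ n := by gcongr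
      _ ≤ 2 * 3 ^ (n + 1) := by rw [pow_succ]; linarith

end Trifferent

theorem trifferent_elementary_bound_general
    (n : ℕ) (C : Finset (Fin n → Fin 3)) (hC : Trifferent C) :
    (C.card : ℝ) ≤ 2 * (3 / 2) ^ n := by
  have h : (C.card : ℝ) * 2 ^ n ≤ 2 * 3 ^ n := by exact_mod_cast hC.card_mul_two_pow_le
  rwa [div_pow, mul_div_assoc', le_div_iff₀ (by positivity)]

theorem trifferent_elementary_bound
    (n : ℕ) (hn : 1 ≤ n) (C : Finset (Fin n → Fin 3)) (hC : Trifferent C) :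
    (C.card : ℝ) ≤ 2 * (3 / 2) ^ n :=
  trifferent_elementary_bound_general n C hC
end

section
/- Elementary bound for perfect k-hash codes: for all integers k ≥ 3 and n ≥ 1, every perfect k-hash code C ⊆ {0,1,…,k−1}^n satisfies |C| ≤ (k−1)·(k/(k−1))^n. -/
def PerfectHash {k n : ℕ} (C : Finset (Fin n → Fin k)) : Prop :=
  ∀ x : Fin k → (Fin n → Fin k), (∀ j, x j ∈ C) → Function.Injective x →
    ∃ i : Fin n, Function.Injective fun j => x j i

theorem perfect_hash_elementary_bound
    (k n : ℕ) (hk : 3 ≤ k) (hn : 1 ≤ n)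
    (C : Finset (Fin n → Fin k)) (hC : PerfectHash C) :
    (C.card : ℝ) ≤ ((k : ℝ) - 1) * ((k : ℝ) / ((k : ℝ) - 1)) ^ n := by
  have hkR : (2:ℝ) ≤ (k:ℝ) - 1 := by
    have : (3:ℝ) ≤ (k:ℝ) := by exact_mod_cast hk
    linarith
  have key : ∀ (T : Finset (Fin n)) (D : Finset (Fin n → Fin k)), PerfectHash D →
      (∀ i : Fin n, i ∉ T → ∃ a : Fin k, ∀ c ∈ D, c i ≠ a) →
      (D.card : ℝ) ≤ ((k:ℝ) - 1) * ((k:ℝ)/((k:ℝ)-1)) ^ T.card := by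
    intro T
    induction T using Finset.induction_on with
    | empty =>
      intro D hD hP
      simp only [Finset.card_empty, pow_zero, mul_one]
      have hcard : D.card ≤ k - 1 := by
        by_contra hlt
        push_neg at hlt
        have hk' : k ≤ D.card := by omega
        have hc : k ≤ Fintype.card ↥D := by rwa [Fintype.card_coe]
        let e : Fin (Fintype.card ↥D) ≃ ↥D := (Fintype.equivFin ↥D).symm
        set x : Fin k → (Fin n → Fin k) := fun j => (e (Fin.castLE hc j) : Fin n → Fin k) with hx
        have hmem : ∀ j, x j ∈ D := fun j => (e (Fin.castLE hc j)).2
        have hinj : Function.Injective x := by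
          intro j1 j2 h
          have := e.injective (Subtype.coe_injective h)
          exact Fin.castLE_injective hc this
        obtain ⟨i, hi⟩ := hD x hmem hinj
        obtain ⟨a, ha⟩ := hP i (Finset.notMem_empty i)
        have hsurj : Function.Surjective fun j => x j i :=
          Finite.injective_iff_surjective.mp hi
        obtain ⟨j, hj⟩ := hsurj a
        exact ha (x j) (hmem j) hj
      calc (D.card : ℝ) ≤ ((k - 1 : ℕ) : ℝ) := by exact_mod_cast hcard
        _ = (k:ℝ) - 1 := by
            have : (1:ℕ) ≤ k := by omega
            push_cast [this]
            ring
    | @insert i T hiT ih =>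
      intro D hD hP
      have hsum : D.card = ∑ a : Fin k, (D.filter fun c => c i = a).card :=
        Finset.card_eq_sum_card_fiberwise (fun x _ => Finset.mem_univ _)
      have hex : ∃ a : Fin k, k * (D.filter fun c => c i = a).card ≤ D.card := by
        haveI : Nonempty (Fin k) := ⟨⟨0, Nat.lt_of_lt_of_le (by norm_num) hk⟩⟩
        obtain ⟨a, -, hmin⟩ := Finset.exists_min_image Finset.univ
          (fun a : Fin k => (D.filter fun c => c i = a).card) Finset.univ_nonempty
        refine ⟨a, ?_⟩
        have hle := Finset.card_nsmul_le_sum Finset.univ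
          (fun b : Fin k => (D.filter fun c => c i = b).card)
          ((D.filter fun c => c i = a).card) (fun b _ => hmin b (Finset.mem_univ b))
        rw [Finset.card_univ, Fintype.card_fin, smul_eq_mul] at hle
        rw [hsum]; exact hle
      obtain ⟨a, ha⟩ := hex
      set D' := D.filter (fun c => ¬ c i = a) with hD'def
      have hsub : D' ⊆ D := Finset.filter_subset _ _
      have hD'ph : PerfectHash D' := fun x hx hinj => hD x (fun j => hsub (hx j)) hinj
      have hP' : ∀ j, j ∉ T → ∃ b : Fin k, ∀ c ∈ D', c j ≠ b := by
        intro j hj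
        by_cases hji : j = i
        · subst hji; exact ⟨a, fun c hc => (Finset.mem_filter.mp hc).2⟩
        · obtain ⟨b, hb⟩ := hP j (by simp [Finset.mem_insert, hj, hji])
          exact ⟨b, fun c hc => hb c (hsub hc)⟩
      have hIH := ih D' hD'ph hP'
      have hcard : (D.filter fun c => c i = a).card + D'.card = D.card := by
        rw [hD'def]
        exact Finset.card_filter_add_card_filter_not _
      rw [Finset.card_insert_of_notMem hiT, pow_succ]
      have h1 : ((k:ℝ) - 1) * D.card ≤ (k:ℝ) * D'.card := by
        have hka : (k:ℝ) * ((D.filter fun c => c i = a).card : ℝ) ≤ (D.card : ℝ) := by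
          exact_mod_cast ha
        have hc : ((D.filter fun c => c i = a).card : ℝ) + (D'.card : ℝ) = (D.card : ℝ) := by
          exact_mod_cast hcard
        nlinarith
      have hq : (0:ℝ) < (k:ℝ) - 1 := by linarith
      have h2 : ((k:ℝ)-1) * (((k:ℝ)/((k:ℝ)-1))^T.card * ((k:ℝ)/((k:ℝ)-1)))
          = (k:ℝ)/((k:ℝ)-1) * (((k:ℝ)-1) * ((k:ℝ)/((k:ℝ)-1))^T.card) := by ring
      rw [h2]
      have h3 : (D.card : ℝ) ≤ (k:ℝ)/((k:ℝ)-1) * D'.card := by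
        rw [div_mul_eq_mul_div, le_div_iff₀ hq]
        linarith
      have h4 := mul_le_mul_of_nonneg_left hIH
        (by positivity : (0:ℝ) ≤ (k:ℝ)/((k:ℝ)-1))
      linarith
  have h := key Finset.univ C hC (by intro i hi; exact absurd (Finset.mem_univ i) hi)
  simpa using h
end

section
/- Iterated recursion achievability: fix an integer n₀ ≥ 1 and a natural number T₀ such that every trifferent code of length n₀ has cardinality at most T₀. Define the real sequence l by l(0) = T₀·(3/2)^{−n₀} and l(m) = ⌊l(m−1)·(3/2)^{n₀+m}⌋·(3/2)^{−(n₀+m)} for m ≥ 1. Then for every m ≥ 0 and every n ≥ n₀ + m, every trifferent code C ⊆ {0,1,2}^n satisfies |C| ≤ l(m)·(3/2)^n. -/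
open Finset

private def tl {n : ℕ} (x : Fin (n+1) → Fin 3) : Fin n → Fin 3 := fun j => x j.succ

private lemma eq_of_tail_eq {n : ℕ} {u v : Fin (n+1) → Fin 3}
    (h : tl u = tl v) (h0 : u 0 = v 0) : u = v := by
  funext i
  refine Fin.cases h0 (fun j => ?_) i
  exact congrFun h j

private lemma fin3_two_eq : ∀ (p q r a b : Fin 3),
    (p = a ∨ p = b) → (q = a ∨ q = b) → (r = a ∨ r = b) →
    p = q ∨ p = r ∨ q = r := by decide

private lemma fin3_third : ∀ (a b : Fin 3), a ≠ b → ∃ c : Fin 3, c ≠ a ∧ c ≠ b := by decide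

private lemma fin3_cover : ∀ (a b c t : Fin 3), a ≠ b → a ≠ c → b ≠ c →
    t = a ∨ t = b ∨ t = c := by decide

private lemma trif_image {n : ℕ} {C : Finset (Fin (n+1) → Fin 3)} (hC : Trifferent C)
    (a b : Fin 3) :
    Trifferent ((C.filter fun x => x 0 = a ∨ x 0 = b).image tl) := by
  intro u hu v hv w hw huv huw hvw
  obtain ⟨x, hx, hxu⟩ := mem_image.1 hu
  obtain ⟨y, hy, hyv⟩ := mem_image.1 hv
  obtain ⟨z, hz, hzw⟩ := mem_image.1 hw
  obtain ⟨hxC, hxa⟩ := mem_filter.1 hx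
  obtain ⟨hyC, hya⟩ := mem_filter.1 hy
  obtain ⟨hzC, hza⟩ := mem_filter.1 hz
  obtain ⟨i, h1, h2, h3⟩ := hC x hxC y hyC z hzC
    (fun h => huv (by rw [← hxu, ← hyv, h]))
    (fun h => huw (by rw [← hxu, ← hzw, h]))
    (fun h => hvw (by rw [← hyv, ← hzw, h]))
  have hi : i ≠ 0 := by
    rintro rfl
    rcases fin3_two_eq (x 0) (y 0) (z 0) a b hxa hya hza with h | h | h
    · exact h1 h
    · exact h2 h
    · exact h3 h
  obtain ⟨j, rfl⟩ := Fin.eq_succ_of_ne_zero hi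
  subst hxu hyv hzw
  exact ⟨j, h1, h2, h3⟩

private lemma noTriple {n : ℕ} {C : Finset (Fin (n+1) → Fin 3)} (hC : Trifferent C)
    {u v z : Fin (n+1) → Fin 3} (hu : u ∈ C) (hv : v ∈ C) (hz : z ∈ C)
    (huv : u ≠ v) (ht : tl u = tl v) (hzu : z ≠ u) (hzv : z ≠ v) :
    z 0 ≠ u 0 ∧ z 0 ≠ v 0 := by
  obtain ⟨i, h1, h2, h3⟩ := hC u hu v hv z hz huv (Ne.symm hzu) (Ne.symm hzv)
  rcases Fin.eq_zero_or_eq_succ i with rfl | ⟨j, rfl⟩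
  · exact ⟨Ne.symm h2, Ne.symm h3⟩
  · exact absurd (congrFun ht j) h1

private lemma filter_collision {n : ℕ} {C : Finset (Fin (n+1) → Fin 3)} (hC : Trifferent C)
    {u v : Fin (n+1) → Fin 3} (hu : u ∈ C) (hv : v ∈ C)
    (huv : u ≠ v) (ht : tl u = tl v) :
    C.filter (fun z => z 0 = u 0) = {u} := by
  have h0 : u 0 ≠ v 0 := fun h => huv (eq_of_tail_eq ht h)
  ext z
  simp only [mem_filter, mem_singleton]
  constructor
  · rintro ⟨hzC, hz0⟩
    by_contra hzu
    have hzv : z ≠ v := fun h => h0 (by rw [← hz0, h])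
    exact (noTriple hC hu hv hzC huv ht hzu hzv).1 hz0
  · rintro rfl
    exact ⟨hu, rfl⟩

private lemma card_parts {n : ℕ} (C : Finset (Fin (n+1) → Fin 3)) {a b c : Fin 3}
    (hab : a ≠ b) (hac : a ≠ c) (hbc : b ≠ c) :
    C.card = (C.filter fun x => x 0 = a).card + (C.filter fun x => x 0 = b).card
      + (C.filter fun x => x 0 = c).card := by
  classical
  have h1 : C.card = ∑ t : Fin 3, (C.filter fun x => x 0 = t).card :=
    card_eq_sum_card_fiberwise (fun x _ => mem_univ _)
  have huniv : (univ : Finset (Fin 3)) = {a, b, c} := by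
    apply Finset.eq_of_subset_of_card_le
    · intro t _
      simp only [mem_insert, mem_singleton]
      exact fin3_cover a b c t hab hac hbc
    · exact Finset.card_le_card (Finset.subset_univ _)
  rw [h1, huniv, Finset.sum_insert (by simp [hab, hac]),
    Finset.sum_insert (by simp [hbc]), Finset.sum_singleton, Nat.add_assoc]

private lemma pair_card {n : ℕ} (C : Finset (Fin (n+1) → Fin 3)) {a b : Fin 3} (hab : a ≠ b) :
    (C.filter fun x => x 0 = a ∨ x 0 = b).card
      = (C.filter fun x => x 0 = a).card + (C.filter fun x => x 0 = b).card := by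
  classical
  rw [Finset.filter_or]
  apply Finset.card_union_of_disjoint
  rw [Finset.disjoint_left]
  intro z hz1 hz2
  exact hab (by rw [← (mem_filter.1 hz1).2, (mem_filter.1 hz2).2])

private lemma Bnd_step {n : ℕ} {B : ℝ} (hB : 2 ≤ B)
    (ih : ∀ D : Finset (Fin n → Fin 3), Trifferent D → (D.card : ℝ) ≤ B)
    (C : Finset (Fin (n+1) → Fin 3)) (hC : Trifferent C) :
    (C.card : ℝ) ≤ 3 / 2 * B := by
  classical
  by_cases hcol : ∀ u ∈ C, ∀ v ∈ C, tl u = tl v → u 0 = v 0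
  · -- no collisions: tail is injective on C
    have hinjC : Set.InjOn tl (C : Set (Fin (n+1) → Fin 3)) := by
      intro u hu v hv h
      exact eq_of_tail_eq h (hcol u hu v hv h)
    have hpair : ∀ a b : Fin 3, a ≠ b →
        ((C.filter fun x => x 0 = a).card + (C.filter fun x => x 0 = b).card : ℝ) ≤ B := by
      intro a b hab
      have := ih _ (trif_image hC a b)
      rw [Finset.card_image_of_injOn (fun u hu v hv h =>
        hinjC (Finset.mem_coe.2 (mem_filter.1 (Finset.mem_coe.1 hu)).1)
          (Finset.mem_coe.2 (mem_filter.1 (Finset.mem_coe.1 hv)).1) h),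
        pair_card C hab] at this
      exact_mod_cast this
    have h01 := hpair 0 1 (by decide)
    have h02 := hpair 0 2 (by decide)
    have h12 := hpair 1 2 (by decide)
    have hc : (C.card : ℝ) = (C.filter fun x => x 0 = 0).card
        + (C.filter fun x => x 0 = 1).card + (C.filter fun x => x 0 = 2).card := by
      exact_mod_cast congrArg (Nat.cast : ℕ → ℝ)
        (card_parts C (a := 0) (b := 1) (c := 2) (by decide) (by decide) (by decide))
    linarith
  · push_neg at hcol
    obtain ⟨x, hx, y, hy, ht, hxy0⟩ := hcol
    have hxy : x ≠ y := fun h => hxy0 (by rw [h])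
    obtain ⟨c, hca, hcb⟩ := fin3_third (x 0) (y 0) hxy0
    have hFa : C.filter (fun z => z 0 = x 0) = {x} := filter_collision hC hx hy hxy ht
    have hFb : C.filter (fun z => z 0 = y 0) = {y} :=
      filter_collision hC hy hx hxy.symm ht.symm
    have hparts := card_parts C (a := x 0) (b := y 0) (c := c) hxy0
      (Ne.symm hca) (Ne.symm hcb)
    rw [hFa, hFb, Finset.card_singleton] at hparts
    -- now bound the c-class
    by_cases hcol2 : ∀ u ∈ (C.filter fun z => z 0 = c ∨ z 0 = x 0),
        ∀ v ∈ (C.filter fun z => z 0 = c ∨ z 0 = x 0), tl u = tl v → u = v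
    · have hbd := ih _ (trif_image hC c (x 0))
      rw [Finset.card_image_of_injOn (fun u hu v hv h =>
        hcol2 u (Finset.mem_coe.1 hu) v (Finset.mem_coe.1 hv) h),
        pair_card C hca, hFa,
        Finset.card_singleton] at hbd
      push_cast at hbd
      have : (C.card : ℝ) = 1 + 1 + (C.filter fun z => z 0 = c).card := by
        exact_mod_cast congrArg (Nat.cast : ℕ → ℝ) hparts
      linarith
    · push_neg at hcol2
      obtain ⟨u, hu, v, hv, htuv, huvne⟩ := hcol2
      obtain ⟨huC, hu0⟩ := mem_filter.1 hu
      obtain ⟨hvC, hv0⟩ := mem_filter.1 hv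
      have hu0v0 : u 0 ≠ v 0 := fun h => huvne (eq_of_tail_eq htuv h)
      have hFc : (C.filter fun z => z 0 = c).card ≤ 1 := by
        rcases hu0 with h | h
        · have hcoll := filter_collision hC huC hvC huvne htuv
          rw [h] at hcoll
          rw [hcoll]; simp
        · rcases hv0 with h' | h'
          · have hcoll := filter_collision hC hvC huC (Ne.symm huvne) htuv.symm
            rw [h'] at hcoll
            rw [hcoll]; simp
          · exact absurd (h.trans h'.symm) hu0v0
      have : (C.card : ℝ) ≤ 3 := by
        have h3 : C.card ≤ 3 := by
          rw [hparts]
          exact Nat.add_le_add_left hFc 2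
        exact_mod_cast h3
      linarith

private lemma three_le {k : ℕ} (hk : 1 ≤ k) {B : ℝ}
    (h : ∀ C : Finset (Fin k → Fin 3), Trifferent C → (C.card : ℝ) ≤ B) : 3 ≤ B := by
  have i0 : Fin k := ⟨0, hk⟩
  have hinj : Function.Injective (fun a : Fin 3 => (fun _ : Fin k => a)) :=
    fun a b hab => congrFun hab i0
  have htr : Trifferent ((univ : Finset (Fin 3)).image (fun a => (fun _ : Fin k => a))) := by
    intro x hx y hy z hz hxy hxz hyz
    obtain ⟨a, -, rfl⟩ := mem_image.1 hx
    obtain ⟨b, -, rfl⟩ := mem_image.1 hy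
    obtain ⟨c, -, rfl⟩ := mem_image.1 hz
    exact ⟨i0, fun h => hxy (funext fun _ => h), fun h => hxz (funext fun _ => h),
      fun h => hyz (funext fun _ => h)⟩
  have := h _ htr
  rwa [Finset.card_image_of_injective _ hinj, Finset.card_univ, Fintype.card_fin,
    Nat.cast_ofNat] at this

private lemma cancel_pow (k : ℕ) : (3/2 : ℝ) ^ (-(k : ℤ)) * (3/2 : ℝ) ^ k = 1 := by
  rw [← zpow_natCast (3/2 : ℝ) k, ← zpow_add₀ (by norm_num : (3/2 : ℝ) ≠ 0)]
  simp

theorem trifferent_iterated_recursion_bound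
    (n₀ : ℕ) (hn₀ : 1 ≤ n₀) (T₀ : ℕ)
    (hT : ∀ C : Finset (Fin n₀ → Fin 3), Trifferent C → C.card ≤ T₀)
    (l : ℕ → ℝ)
    (hl0 : l 0 = (T₀ : ℝ) * (3 / 2 : ℝ) ^ (-(n₀ : ℤ)))
    (hl : ∀ m : ℕ, 1 ≤ m →
      l m = (⌊l (m - 1) * (3 / 2 : ℝ) ^ (n₀ + m)⌋ : ℝ) * (3 / 2 : ℝ) ^ (-((n₀ : ℤ) + (m : ℤ)))) :
    ∀ m n : ℕ, n₀ + m ≤ n → ∀ C : Finset (Fin n → Fin 3), Trifferent C →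
      (C.card : ℝ) ≤ l m * (3 / 2) ^ n := by
  have hbase : ∀ m : ℕ, ∀ C : Finset (Fin (n₀ + m) → Fin 3), Trifferent C →
      (C.card : ℝ) ≤ l m * (3 / 2) ^ (n₀ + m) := by
    intro m
    induction m with
    | zero =>
      intro C hCt
      have h1 : l 0 * (3/2 : ℝ) ^ (n₀ + 0) = (T₀ : ℝ) := by
        rw [hl0, mul_assoc, Nat.add_zero, cancel_pow n₀, mul_one]
      rw [h1]
      exact_mod_cast hT C hCt
    | succ m ih =>
      have hB3 : (3 : ℝ) ≤ l m * (3/2) ^ (n₀ + m) := three_le (by omega) ih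
      have hstep : ∀ C : Finset (Fin (n₀ + m + 1) → Fin 3), Trifferent C →
          (C.card : ℝ) ≤ 3/2 * (l m * (3/2) ^ (n₀ + m)) :=
        Bnd_step (by linarith) ih
      intro C hCt
      have h2 : (C.card : ℝ) ≤ l m * (3/2 : ℝ) ^ (n₀ + (m + 1)) := by
        have := hstep C hCt
        have he : (3/2 : ℝ) * (l m * (3/2) ^ (n₀ + m)) = l m * (3/2) ^ (n₀ + (m + 1)) := by
          rw [show n₀ + (m + 1) = (n₀ + m) + 1 from rfl, pow_succ]
          ring
        rwa [he] at this
      have h3 : (C.card : ℤ) ≤ ⌊l m * (3/2 : ℝ) ^ (n₀ + (m + 1))⌋ :=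
        Int.le_floor.2 (by exact_mod_cast h2)
      have hlm : l (m + 1) = (⌊l m * (3/2 : ℝ) ^ (n₀ + (m + 1))⌋ : ℝ)
          * (3/2 : ℝ) ^ (-((n₀ + (m + 1) : ℕ) : ℤ)) := by
        have := hl (m + 1) (by omega)
        simpa using this
      rw [hlm, mul_assoc, cancel_pow (n₀ + (m + 1)), mul_one]
      exact_mod_cast h3
  intro m n hmn
  obtain ⟨d, rfl⟩ : ∃ d, n = n₀ + m + d := ⟨n - (n₀ + m), by omega⟩
  clear hmn
  induction d with
  | zero => exact hbase m
  | succ d ihd =>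
    intro C hCt
    have hB3 : (3 : ℝ) ≤ l m * (3/2) ^ (n₀ + m + d) := three_le (by omega) ihd
    have := Bnd_step (by linarith) ihd C hCt
    have he : (3/2 : ℝ) * (l m * (3/2) ^ (n₀ + m + d)) = l m * (3/2) ^ (n₀ + m + (d + 1)) := by
      rw [show n₀ + m + (d + 1) = (n₀ + m + d) + 1 from rfl, pow_succ]
      ring
    rwa [he] at this
end

section
/- Lower-bound comparison sequence: fix an integer n₀ ≥ 1 and a natural number T₀, and define the real sequences l and d by l(0) = d(0) = T₀·(3/2)^{−n₀}, l(m) = ⌊l(m−1)·(3/2)^{n₀+m}⌋·(3/2)^{−(n₀+m)} and d(m) = d(m−1) − (1/2)·(3/2)^{−(n₀+m)} for m ≥ 1. Then l(m) ≥ d(m) for every m ≥ 0. -/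
theorem l_ge_d
    (n₀ : ℕ) (hn₀ : 1 ≤ n₀) (T₀ : ℕ)
    (l d : ℕ → ℝ)
    (hl0 : l 0 = (T₀ : ℝ) * (3 / 2 : ℝ) ^ (-(n₀ : ℤ)))
    (hd0 : d 0 = (T₀ : ℝ) * (3 / 2 : ℝ) ^ (-(n₀ : ℤ)))
    (hl : ∀ m : ℕ, 1 ≤ m →
      l m = (⌊l (m - 1) * (3 / 2 : ℝ) ^ (n₀ + m)⌋ : ℝ) * (3 / 2 : ℝ) ^ (-((n₀ : ℤ) + (m : ℤ))))
    (hd : ∀ m : ℕ, 1 ≤ m →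
      d m = d (m - 1) - (1 / 2) * (3 / 2 : ℝ) ^ (-((n₀ : ℤ) + (m : ℤ)))) :
    ∀ m : ℕ, d m ≤ l m := by
  have hne : (3 / 2 : ℝ) ≠ 0 := by norm_num
  suffices H : ∀ m : ℕ,
      (∃ k : ℤ, l m = (k : ℝ) * (3 / 2 : ℝ) ^ (-((n₀ : ℤ) + (m : ℤ)))) ∧ d m ≤ l m by
    exact fun m => (H m).2
  intro m
  induction m with
  | zero =>
    refine ⟨⟨(T₀ : ℤ), ?_⟩, by rw [hl0, hd0]⟩
    rw [hl0]; norm_num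
  | succ m ih =>
    obtain ⟨⟨k, hk⟩, hdl⟩ := ih
    set p : ℝ := (3 / 2 : ℝ) ^ (-((n₀ : ℤ) + ((m + 1 : ℕ) : ℤ))) with hp
    have hppos : 0 < p := by positivity
    set x : ℝ := l ((m + 1) - 1) * (3 / 2 : ℝ) ^ (n₀ + (m + 1)) with hxdef
    have hlm : l (m + 1) = (⌊x⌋ : ℝ) * p := hl (m + 1) (by omega)
    have hdm : d (m + 1) = d m - (1 / 2) * p := hd (m + 1) (by omega)
    have hx : x = (3 * (k : ℝ)) / 2 := by
      have h1 : ((3 : ℝ) / 2) ^ (n₀ + (m + 1)) = (3 / 2 : ℝ) ^ ((n₀ + (m + 1) : ℕ) : ℤ) :=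
        (zpow_natCast _ _).symm
      have h2 : (-((n₀ : ℤ) + (m : ℤ)) + ((n₀ + (m + 1) : ℕ) : ℤ)) = 1 := by push_cast; ring
      rw [hxdef]
      simp only [Nat.add_sub_cancel]
      rw [hk, h1, mul_assoc, ← zpow_add₀ hne, h2, zpow_one]
      ring
    have hfl : (3 * k - 1 : ℤ) ≤ 2 * ⌊x⌋ := by
      have h1 : x - 1 < (⌊x⌋ : ℝ) := Int.sub_one_lt_floor x
      have h2 : ((3 * k - 2 : ℤ) : ℝ) < ((2 * ⌊x⌋ : ℤ) : ℝ) := by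
        push_cast
        linarith [hx.le, hx.ge]
      have : (3 * k - 2 : ℤ) < 2 * ⌊x⌋ := by exact_mod_cast h2
      omega
    have hfl' : ((3 * (k : ℝ) - 1) / 2) ≤ (⌊x⌋ : ℝ) := by
      have : ((3 * k - 1 : ℤ) : ℝ) ≤ ((2 * ⌊x⌋ : ℤ) : ℝ) := by exact_mod_cast hfl
      push_cast at this
      linarith
    have h32 : (3 / 2 : ℝ) ^ (-((n₀ : ℤ) + (m : ℤ))) = p * (3 / 2) := by
      rw [hp, ← zpow_add_one₀ hne]
      congr 1
      push_cast
      ring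
    have hlmp : l m = (k : ℝ) * (3 / 2) * p := by
      rw [hk, h32]; ring
    have key : l m - (1 / 2) * p ≤ l (m + 1) := by
      rw [hlm, hlmp]
      have := mul_le_mul_of_nonneg_right hfl' hppos.le
      nlinarith
    refine ⟨⟨⌊x⌋, hlm⟩, ?_⟩
    rw [hdm]
    have : d m - (1 / 2) * p ≤ l m - (1 / 2) * p := by linarith
    linarith
end

section
/- Two-symbol restriction bound: let n ≥ 2 and let M be a natural number such that every trifferent code of length n−1 has cardinality at most M. Then for every trifferent code C ⊆ {0,1,2}^n and every pair of distinct symbols a, b ∈ {0,1,2}, the number of elements of C whose first coordinate equals a or b is at most M. -/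
theorem trifferent_two_symbol_restriction
    (n : ℕ) (hn : 2 ≤ n) (M : ℕ)
    (hM : ∀ C : Finset (Fin (n - 1) → Fin 3), Trifferent C → C.card ≤ M)
    (C : Finset (Fin n → Fin 3)) (hC : Trifferent C)
    (a b : Fin 3) (hab : a ≠ b) :
    (C.filter fun x => x ⟨0, by omega⟩ = a ∨ x ⟨0, by omega⟩ = b).card ≤ M := by
  set S := C.filter fun x => x ⟨0, by omega⟩ = a ∨ x ⟨0, by omega⟩ = b with hS
  by_cases hcard : S.card ≤ 2
  · have h2 : 2 ≤ M := by
      have hf : ((fun _ => 0 : Fin (n-1) → Fin 3) ≠ (fun _ => 1)) := by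
        intro h
        have := congrFun h ⟨0, by omega⟩
        simp at this
      have := hM {(fun _ => 0), (fun _ => 1)} ?_
      · simpa [Finset.card_insert_of_notMem, hf] using this
      · intro x hx y hy z hz hxy hxz hyz
        simp only [Finset.mem_insert, Finset.mem_singleton] at hx hy hz
        rcases hx with rfl|rfl <;> rcases hy with rfl|rfl <;> rcases hz with rfl|rfl <;> simp_all
    omega
  · push_neg at hcard
    set t : (Fin n → Fin 3) → (Fin (n-1) → Fin 3) := fun x j => x ⟨j.val + 1, by omega⟩ with ht
    have key : ∀ x ∈ S, ∀ y ∈ S, ∀ z ∈ S, x ≠ y → x ≠ z → y ≠ z →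
        ∃ j : Fin (n-1), t x j ≠ t y j ∧ t x j ≠ t z j ∧ t y j ≠ t z j := by
      intro x hx y hy z hz hxy hxz hyz
      obtain ⟨hxC, hxa⟩ := Finset.mem_filter.mp hx
      obtain ⟨hyC, hya⟩ := Finset.mem_filter.mp hy
      obtain ⟨hzC, hza⟩ := Finset.mem_filter.mp hz
      obtain ⟨i, h1, h2, h3⟩ := hC x hxC y hyC z hzC hxy hxz hyz
      have hi : i.val ≠ 0 := by
        intro h0
        have hi0 : i = ⟨0, by omega⟩ := Fin.ext h0
        rw [hi0] at h1 h2 h3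
        rcases hxa with h|h <;> rcases hya with h'|h' <;> rcases hza with h''|h'' <;>
          simp_all
      refine ⟨⟨i.val - 1, by omega⟩, ?_⟩
      have hij : (⟨(i.val - 1) + 1, by omega⟩ : Fin n) = i := Fin.ext (by simp; omega)
      simp only [ht, hij]
      exact ⟨h1, h2, h3⟩
    have hinj : Set.InjOn t S := by
      intro x hx y hy hxy
      by_contra hne
      have hex : ∃ z ∈ S, z ≠ x ∧ z ≠ y := by
        by_contra h
        push_neg at h
        have hsub : S ⊆ {x, y} := by
          intro z hz
          rcases Classical.em (z = x) with rfl|h1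
          · simp
          · have := h z hz h1
            simp [this]
        have := Finset.card_le_card hsub
        have h2 : ({x, y} : Finset _).card ≤ 2 :=
          (Finset.card_insert_le _ _).trans (by simp)
        omega
      obtain ⟨z, hz, hzx, hzy⟩ := hex
      obtain ⟨j, h1, _, _⟩ := key x hx y hy z hz hne (Ne.symm hzx) (Ne.symm hzy)
      exact h1 (congrFun hxy j)
    have himg : (S.image t).card = S.card := Finset.card_image_of_injOn hinj
    have htrif : Trifferent (S.image t) := by
      intro u hu v hv w hw huv huw hvw
      obtain ⟨x, hx, rfl⟩ := Finset.mem_image.mp hu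
      obtain ⟨y, hy, rfl⟩ := Finset.mem_image.mp hv
      obtain ⟨z, hz, rfl⟩ := Finset.mem_image.mp hw
      exact key x hx y hy z hz (fun h => huv (by rw [h])) (fun h => huw (by rw [h]))
        (fun h => hvw (by rw [h]))
    have := hM _ htrif
    omega
end

section
/- Remark with n₀ = 4: define the real sequence l by l(0) = 9·(3/2)^{−4} and l(m) = ⌊l(m−1)·(3/2)^{4+m}⌋·(3/2)^{−(4+m)} for m ≥ 1. Then l(m) ≥ 8·(3/2)^{−4} for every m ≥ 0; in particular, any limit of l(m) as m → ∞ is at least 8·(3/2)^{−4} ≈ 1.58. -/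
theorem l_sequence_lower_bound_n0_four
    (l : ℕ → ℝ)
    (hl0 : l 0 = 9 * (3 / 2 : ℝ) ^ (-(4 : ℤ)))
    (hl : ∀ m : ℕ, 1 ≤ m →
      l m = (⌊l (m - 1) * (3 / 2 : ℝ) ^ (4 + m)⌋ : ℝ) * (3 / 2 : ℝ) ^ (-((4 : ℤ) + (m : ℤ)))) :
    ∀ m : ℕ, 8 * (3 / 2 : ℝ) ^ (-(4 : ℤ)) ≤ l m := by
  have hb : (3 / 2 : ℝ) ≠ 0 := by norm_num
  have key : ∀ m : ℕ, ∃ k : ℤ, l m = (k : ℝ) * (3 / 2 : ℝ) ^ (-((4 : ℤ) + (m : ℤ)))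
      ∧ 8 * 3 ^ m + 2 ^ m ≤ 2 ^ m * k := by
    intro m
    induction m with
    | zero => exact ⟨9, by simpa using hl0, by norm_num⟩
    | succ m ih =>
      obtain ⟨k, hk, hineq⟩ := ih
      refine ⟨(3 * k) / 2, ?_, ?_⟩
      · have h1 := hl (m + 1) (by omega)
        simp only [Nat.add_sub_cancel] at h1
        have h2 : l m * (3 / 2 : ℝ) ^ (4 + (m + 1)) = ((3 * k : ℤ) : ℝ) / ((2 : ℕ) : ℝ) := by
          rw [hk, show ((3 / 2 : ℝ) ^ (4 + (m + 1)) = (3 / 2 : ℝ) ^ ((4 + (m + 1) : ℕ) : ℤ))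
            from (zpow_natCast _ _).symm, mul_assoc, ← zpow_add₀ hb]
          have : (-((4 : ℤ) + (m : ℤ)) + ((4 + (m + 1) : ℕ) : ℤ)) = 1 := by push_cast; ring
          rw [this]
          push_cast; ring
        have hfloor : ⌊((3 * k : ℤ) : ℝ) / ((2 : ℕ) : ℝ)⌋ = (3 * k) / 2 := by
          rw [show ((3 * k : ℤ) : ℝ) / ((2 : ℕ) : ℝ) = (((3 * k : ℤ) / ((2 : ℕ) : ℚ) : ℚ) : ℝ)
            by push_cast; ring, Rat.floor_cast, Rat.floor_intCast_div_natCast]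
          norm_num
        rw [h1, h2, hfloor]
      · have hq : 3 * k - 1 ≤ 2 * ((3 * k) / 2) := by omega
        have hp : (0 : ℤ) < 2 ^ m := by positivity
        calc (8 : ℤ) * 3 ^ (m + 1) + 2 ^ (m + 1) = 3 * (8 * 3 ^ m + 2 ^ m) - 2 ^ m := by ring
          _ ≤ 3 * (2 ^ m * k) - 2 ^ m := by linarith
          _ = 2 ^ m * (3 * k - 1) := by ring
          _ ≤ 2 ^ m * (2 * ((3 * k) / 2)) := by
              exact mul_le_mul_of_nonneg_left hq hp.le
          _ = 2 ^ (m + 1) * ((3 * k) / 2) := by ring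
  intro m
  obtain ⟨k, hk, hineq⟩ := key m
  have hm : (0 : ℝ) < (3 / 2 : ℝ) ^ m := by positivity
  have hkR : 8 * (3 / 2 : ℝ) ^ m ≤ (k : ℝ) := by
    have : (8 * 3 ^ m + 2 ^ m : ℝ) ≤ 2 ^ m * (k : ℝ) := by exact_mod_cast hineq
    have h2m : (0 : ℝ) < 2 ^ m := by positivity
    rw [div_pow, mul_div_assoc', div_le_iff₀ h2m]
    nlinarith [this]
  rw [hk, show (-((4 : ℤ) + (m : ℤ))) = (-(4 : ℤ)) + (-(m : ℤ)) by ring, zpow_add₀ hb,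
    zpow_neg _ (m : ℤ), zpow_natCast]
  have h4 : (0 : ℝ) < (3 / 2 : ℝ) ^ (-(4 : ℤ)) := by positivity
  calc 8 * (3 / 2 : ℝ) ^ (-(4 : ℤ))
      = (8 * (3 / 2 : ℝ) ^ m) * ((3 / 2 : ℝ) ^ (-(4 : ℤ)) * ((3 / 2 : ℝ) ^ m)⁻¹) := by
        field_simp
    _ ≤ (k : ℝ) * ((3 / 2 : ℝ) ^ (-(4 : ℤ)) * ((3 / 2 : ℝ) ^ m)⁻¹) := by
        apply mul_le_mul_of_nonneg_right hkR
        positivity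
end
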